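/- arXiv:2401.10527 — 3 statements merged into one kernel-verified Lean document; each statement's English description precedes it below -/
import Mathlib

section
/- Let t, r₁, r₂ be positive integers with t ≤ ⌊r₁/2⌋ and t ≤ ⌊r₂/2⌋, and let L be a field. Let U, V : ℕ×ℕ → L be doubly periodic arrays of period r₁×r₂ whose footprints satisfy |Δ(U)| ≤ t and |Δ(V)| ≤ t. If U(n) = V(n) for all n ∈ 𝒮(t), then U = V. -/
/-- A monomial order on `ℕ × ℕ`: a linear well-order compatible with addition that
refines the componentwise partial order. -/
structure MonomialOrder2 where
  le : ℕ × ℕ → ℕ × ℕ → Prop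
  le_refl : ∀ a, le a a
  le_trans : ∀ a b c, le a b → le b c → le a c
  le_antisymm : ∀ a b, le a b → le b a → a = b
  le_total : ∀ a b, le a b ∨ le b a
  wf : WellFounded (fun a b : ℕ × ℕ => le a b ∧ a ≠ b)
  add_right : ∀ a b k, le a b → le (a + k) (b + k)
  refines : ∀ a b : ℕ × ℕ, a.1 ≤ b.1 → a.2 ≤ b.2 → le a b

/-- Strict version of the monomial order. -/
def MonomialOrder2.lt (T : MonomialOrder2) (a b : ℕ × ℕ) : Prop :=
  T.le a b ∧ a ≠ b

section Defs

variable {L : Type*} [Field L]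

/-- `IsLP T f s` says `s` is the leading power product exponent of `f` w.r.t. `T`. -/
def IsLP (T : MonomialOrder2) (f : AddMonoidAlgebra L (ℕ × ℕ)) (s : ℕ × ℕ) : Prop :=
  s ∈ f.coeff.support ∧ ∀ m ∈ f.coeff.support, T.le m s

/-- `recEval U f s n` is `f[U]_n`, where `s` is the leading power product exponent of `f`. -/
noncomputable def recEval (U : ℕ × ℕ → L) (f : AddMonoidAlgebra L (ℕ × ℕ))
    (s n : ℕ × ℕ) : L :=
  if s.1 ≤ n.1 ∧ s.2 ≤ n.2 then ∑ m ∈ f.coeff.support, f.coeff m * U (m + n - s) else 0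

/-- `Lambda T U l` is `Λ(u^l)`, the set of nonzero polynomials valid at all
`n` with `LP f ⪯ n` and `n <_T l`. -/
def Lambda (T : MonomialOrder2) (U : ℕ × ℕ → L) (l : ℕ × ℕ) :
    Set (AddMonoidAlgebra L (ℕ × ℕ)) :=
  { f | f ≠ 0 ∧ ∀ s n : ℕ × ℕ, IsLP T f s → s.1 ≤ n.1 → s.2 ≤ n.2 → T.lt n l →
      recEval U f s n = 0 }

/-- `𝔏(U)`: nonzero polynomials generating the whole array `U`. -/
def LambdaU (T : MonomialOrder2) (U : ℕ × ℕ → L) :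
    Set (AddMonoidAlgebra L (ℕ × ℕ)) :=
  { f | f ≠ 0 ∧ ∀ (s n : ℕ × ℕ), IsLP T f s → recEval U f s n = 0 }

/-- The footprint `Δ(U)` of the ideal of linear recurring relations of `U`. -/
def footprint (T : MonomialOrder2) (U : ℕ × ℕ → L) : Set (ℕ × ℕ) :=
  { n | ∀ f s, f ∈ LambdaU T U → IsLP T f s → ¬(s.1 ≤ n.1 ∧ s.2 ≤ n.2) }

/-- A doubly periodic array of period `r₁ × r₂`. -/
def DoublyPeriodic (r₁ r₂ : ℕ) (U : ℕ × ℕ → L) : Prop :=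
  ∀ n m : ℕ × ℕ, n.1 % r₁ = m.1 % r₁ → n.2 % r₂ = m.2 % r₂ → U n = U m

/-- Evaluation of a bivariate polynomial with coefficients in `L` at `(x, y)`. -/
noncomputable def evalAtL (f : AddMonoidAlgebra L (ℕ × ℕ)) (x y : L) : L :=
  ∑ m ∈ f.coeff.support, f.coeff m * x ^ m.1 * y ^ m.2

end Defs

/-- Evaluation of a bivariate polynomial with coefficients in `F` at a point of `L`. -/
noncomputable def evalAt {F L : Type*} [Field F] [Field L] [Algebra F L]
    (e : AddMonoidAlgebra F (ℕ × ℕ)) (x y : L) : L :=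
  ∑ s ∈ e.coeff.support, algebraMap F L (e.coeff s) * x ^ s.1 * y ^ s.2

/-- The index box `I = {0,…,r₁−1} × {0,…,r₂−1}`. -/
def Ibox (r₁ r₂ : ℕ) : Set (ℕ × ℕ) := { p | p.1 < r₁ ∧ p.2 < r₂ }

/-- `s^(1),…,s^(d)` (0-indexed: `s 0, …, s (d-1)`) is a sequence of defining points. -/
def IsDefPoints (d : ℕ) (s : ℕ → ℕ × ℕ) : Prop :=
  0 < d ∧ (∀ i j, i < j → j < d → (s j).1 < (s i).1) ∧
    (∀ i j, i < j → j < d → (s i).2 < (s j).2) ∧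
    (s (d - 1)).1 = 0 ∧ (s 0).2 = 0

/-- The delta-set of a sequence of defining points. -/
def deltaSet (d : ℕ) (s : ℕ → ℕ × ℕ) : Set (ℕ × ℕ) :=
  { m | ∃ i, i + 1 < d ∧ m.1 + 1 ≤ (s i).1 ∧ m.2 + 1 ≤ (s (i + 1)).2 }

/-- `IsMinimalSet T U l d s f`: `{f 0, …, f (d-1)}` is a minimal set of polynomials
for `u^l`, with defining points `s 0, …, s (d-1)`. -/
def IsMinimalSet {L : Type*} [Field L] (T : MonomialOrder2) (U : ℕ × ℕ → L) (l : ℕ × ℕ)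
    (d : ℕ) (s : ℕ → ℕ × ℕ) (f : ℕ → AddMonoidAlgebra L (ℕ × ℕ)) : Prop :=
  IsDefPoints d s ∧
    (∀ i, i < d → f i ∈ Lambda T U l ∧ IsLP T (f i) (s i)) ∧
    (∀ g sg, IsLP T g sg → sg ∈ deltaSet d s → g ∉ Lambda T U l)

/-- The set of indexes `𝒮(t)`. -/
def Sset (t : ℕ) : Set (ℕ × ℕ) :=
  { p | (p.1 = 0 ∧ p.2 ≤ 2 * t - 1) ∨ (p.2 = 0 ∧ p.1 ≤ 2 * t - 1) ∨
      (1 ≤ p.1 ∧ 1 ≤ p.2 ∧ p.1 + p.2 ≤ t) }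

/-!
Put `W = U - V`. An array vanishes as soon as it vanishes on its footprint: outside the footprint
some relation with leading exponent `s ⪯ n` expresses `W n` through values at exponents
`<_T n`, so well-founded induction along `≤_T` applies. If `n ∈ Δ(W)` and `n = a + b` with
`a ∉ Δ(U)`, `b ∉ Δ(V)`, the product of the two witnessing relations lies in the recurrence ideals
of both `U` and `V`, hence of `W`, and has leading exponent `⪯ n`. So the involution
`a ↦ n - a` of the box `{a ⪯ n}` maps the complement of `Δ(U)` into `Δ(V)`, giving
`(n₁ + 1)(n₂ + 1) ≤ |Δ(U)| + |Δ(V)| ≤ 2t`, which forces `n ∈ 𝒮(t)`, where `W` vanishes.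
Since `Set.ncard` of an infinite set is `0`, the bounds on `|Δ|` need finite footprints: the
periods provide the relations `X^(r₁,0) - 1` and `X^(0,r₂) - 1`, which confine them to a box.
-/

open AddMonoidAlgebra

namespace MonomialOrder2

variable (T : MonomialOrder2)

lemma le_of_prod_le {a b : ℕ × ℕ} (h : a ≤ b) : T.le a b :=
  T.refines a b h.1 h.2

lemma add_left {a b : ℕ × ℕ} (k : ℕ × ℕ) (h : T.le a b) : T.le (k + a) (k + b) := by
  simpa only [add_comm k] using T.add_right a b k h

lemma add_le_add {a b c d : ℕ × ℕ} (hab : T.le a b) (hcd : T.le c d) :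
    T.le (a + c) (b + d) :=
  T.le_trans _ _ _ (T.add_right a b c hab) (T.add_left b hcd)

lemma uniqueAdd_of_forall_le {A B : Finset (ℕ × ℕ)} {a b : ℕ × ℕ}
    (hA : ∀ x ∈ A, T.le x a) (hB : ∀ y ∈ B, T.le y b) : UniqueAdd A B a b := by
  intro x y hx hy hxy
  have hxa : x + b = a + b :=
    T.le_antisymm _ _ (T.add_right x a b (hA x hx)) (hxy ▸ T.add_left x (hB y hy))
  have hx : x = a := add_right_cancel hxa
  subst hx
  exact ⟨rfl, add_left_cancel hxy⟩

end MonomialOrder2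

section Recurrences

variable {L : Type*} [Field L] (T : MonomialOrder2)

lemma IsLP.ne_zero {f : AddMonoidAlgebra L (ℕ × ℕ)} {s : ℕ × ℕ} (hs : IsLP T f s) : f ≠ 0 := by
  rintro rfl
  simp [IsLP] at hs

lemma isLP_mul {f g : AddMonoidAlgebra L (ℕ × ℕ)} {a b : ℕ × ℕ} (hf : IsLP T f a)
    (hg : IsLP T g b) : IsLP T (f * g) (a + b) := by
  classical
  refine ⟨?_, fun m hm => ?_⟩
  · rw [Finsupp.mem_support_iff, coeff_mul_add_of_uniqueAdd (T.uniqueAdd_of_forall_le hf.2 hg.2)]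
    exact mul_ne_zero (Finsupp.mem_support_iff.mp hf.1) (Finsupp.mem_support_iff.mp hg.1)
  · obtain ⟨x, hx, y, hy, rfl⟩ := Finset.mem_add.mp (support_coeff_mul_subset f g hm)
    exact T.add_le_add (hf.2 x hx) (hg.2 y hy)

/-- `f[U]_n = shiftEval U f (n - LP f)` for `LP f ⪯ n`. -/
noncomputable def shiftEval (U : ℕ × ℕ → L) (f : AddMonoidAlgebra L (ℕ × ℕ)) (k : ℕ × ℕ) : L :=
  Finsupp.linearCombination L (fun m => U (m + k)) f.coeff

variable {U V : ℕ × ℕ → L}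

lemma shiftEval_eq_sum (f : AddMonoidAlgebra L (ℕ × ℕ)) (k : ℕ × ℕ) :
    shiftEval U f k = ∑ m ∈ f.coeff.support, f.coeff m * U (m + k) :=
  Finsupp.linearCombination_apply L f.coeff

lemma shiftEval_add (f g : AddMonoidAlgebra L (ℕ × ℕ)) (k : ℕ × ℕ) :
    shiftEval U (f + g) k = shiftEval U f k + shiftEval U g k := by
  rw [shiftEval, coeff_add, map_add, shiftEval, shiftEval]

lemma shiftEval_sub (f g : AddMonoidAlgebra L (ℕ × ℕ)) (k : ℕ × ℕ) :
    shiftEval U (f - g) k = shiftEval U f k - shiftEval U g k := by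
  rw [shiftEval, coeff_sub, map_sub, shiftEval, shiftEval]

lemma shiftEval_single (a : ℕ × ℕ) (c : L) (k : ℕ × ℕ) :
    shiftEval U (single a c) k = c * U (a + k) := by
  rw [shiftEval, coeff_single, Finsupp.linearCombination_single, smul_eq_mul]

lemma shiftEval_single_mul (a : ℕ × ℕ) (c : L) (g : AddMonoidAlgebra L (ℕ × ℕ)) (k : ℕ × ℕ) :
    shiftEval U (single a c * g) k = c * shiftEval U g (a + k) := by
  induction g using AddMonoidAlgebra.induction_linear with
  | zero => simp [shiftEval]
  | add g₁ g₂ h₁ h₂ => rw [mul_add, shiftEval_add, shiftEval_add, h₁, h₂, mul_add]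
  | single b d => rw [single_mul_single, shiftEval_single, shiftEval_single, mul_assoc,
      add_right_comm, add_comm (a + k) b]

lemma shiftEval_sub_array (f : AddMonoidAlgebra L (ℕ × ℕ)) (k : ℕ × ℕ) :
    shiftEval (U - V) f k = shiftEval U f k - shiftEval V f k := by
  simp only [shiftEval_eq_sum, Pi.sub_apply, mul_sub, Finset.sum_sub_distrib]

noncomputable def recurrenceIdeal (U : ℕ × ℕ → L) : Ideal (AddMonoidAlgebra L (ℕ × ℕ)) where
  carrier := {f | ∀ k, shiftEval U f k = 0}
  zero_mem' k := by simp [shiftEval]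
  add_mem' hf hg k := by rw [shiftEval_add, hf, hg, add_zero]
  smul_mem' f g hg k := by
    induction f using AddMonoidAlgebra.induction_linear with
    | zero => simp [shiftEval]
    | add f₁ f₂ h₁ h₂ => rw [smul_eq_mul, add_mul, shiftEval_add, ← smul_eq_mul, h₁,
        ← smul_eq_mul, h₂, add_zero]
    | single a c => rw [smul_eq_mul, shiftEval_single_mul, hg, mul_zero]

lemma recurrenceIdeal_inf_le_sub :
    recurrenceIdeal U ⊓ recurrenceIdeal V ≤ recurrenceIdeal (U - V) :=
  fun _ hf k => by rw [shiftEval_sub_array, hf.1 k, hf.2 k, sub_zero]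

lemma recEval_of_le (f : AddMonoidAlgebra L (ℕ × ℕ)) {s n : ℕ × ℕ} (h : s ≤ n) :
    recEval U f s n = shiftEval U f (n - s) := by
  rw [recEval, if_pos ⟨h.1, h.2⟩, shiftEval_eq_sum]
  refine Finset.sum_congr rfl fun m _ => ?_
  rw [add_tsub_assoc_of_le h]

lemma mem_LambdaU_iff {f : AddMonoidAlgebra L (ℕ × ℕ)} {s : ℕ × ℕ} (hs : IsLP T f s) :
    f ∈ LambdaU T U ↔ f ∈ recurrenceIdeal U := by
  refine ⟨fun hf k => ?_, fun hf => ⟨hs.ne_zero T, fun s' n _ => ?_⟩⟩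
  · rw [← add_tsub_cancel_left s k, ← recEval_of_le f le_self_add]
    exact hf.2 s (s + k) hs
  · by_cases h : s' ≤ n
    · rw [recEval_of_le f h, hf]
    · rw [recEval, if_neg (show ¬(_ ∧ _) from h)]

lemma notMem_footprint_iff {n : ℕ × ℕ} :
    n ∉ footprint T U ↔ ∃ f s, f ∈ recurrenceIdeal U ∧ IsLP T f s ∧ s ≤ n := by
  simp only [footprint, Set.mem_ofPred_eq, not_forall, not_not, exists_prop]
  refine exists_congr fun f => exists_congr fun s => ?_
  constructor
  · rintro ⟨hf, hs, hsn⟩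
    exact ⟨(mem_LambdaU_iff T hs).1 hf, hs, hsn⟩
  · rintro ⟨hf, hs, hsn⟩
    exact ⟨(mem_LambdaU_iff T hs).2 hf, hs, hsn⟩

lemma eq_zero_of_isLP {W : ℕ × ℕ → L} {f : AddMonoidAlgebra L (ℕ × ℕ)} {s n : ℕ × ℕ}
    (hf : f ∈ recurrenceIdeal W) (hs : IsLP T f s) (hsn : s ≤ n)
    (hlt : ∀ m, T.lt m n → W m = 0) : W n = 0 := by
  have hsum := hf (n - s)
  have hn : s + (n - s) = n := add_tsub_cancel_of_le hsn
  rw [shiftEval_eq_sum, Finset.sum_eq_single_of_mem s hs.1 fun m hm hms => ?_, hn] at hsum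
  · exact (mul_eq_zero.mp hsum).resolve_left (Finsupp.mem_support_iff.mp hs.1)
  · have hle : T.le (m + (n - s)) n := by
      have := T.add_right m s (n - s) (hs.2 m hm)
      rwa [hn] at this
    exact mul_eq_zero_of_right _ (hlt _ ⟨hle, fun h => hms (add_right_cancel (h.trans hn.symm))⟩)

lemma eq_zero_of_forall_mem_footprint {W : ℕ × ℕ → L} (hW : ∀ n ∈ footprint T W, W n = 0) :
    W = 0 := by
  funext n
  induction n using T.wf.induction with
  | _ n ih =>
    by_cases hn : n ∈ footprint T W
    · exact hW n hn
    · obtain ⟨f, s, hf, hs, hsn⟩ := (notMem_footprint_iff T).1 hn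
      exact eq_zero_of_isLP T hf hs hsn ih

lemma mem_footprint_or_of_mem_footprint_sub {n a b : ℕ × ℕ} (hn : n ∈ footprint T (U - V))
    (hab : a + b = n) : a ∈ footprint T U ∨ b ∈ footprint T V := by
  by_contra! h
  obtain ⟨f, s, hf, hfs, hsa⟩ := (notMem_footprint_iff T).1 h.1
  obtain ⟨g, s', hg, hgs', hsb⟩ := (notMem_footprint_iff T).1 h.2
  have hfg : f * g ∈ recurrenceIdeal (U - V) :=
    recurrenceIdeal_inf_le_sub ⟨Ideal.mul_mem_right g _ hf, Ideal.mul_mem_left _ f hg⟩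
  exact (notMem_footprint_iff T).2
    ⟨f * g, s + s', hfg, isLP_mul T hfs hgs', hab ▸ add_le_add hsa hsb⟩ hn

lemma isLP_single_sub_one {s : ℕ × ℕ} (hs : s ≠ 0) :
    IsLP T (single s (1 : L) - single 0 1) s := by
  refine ⟨by simp [coeff_sub, coeff_single, hs.symm], fun m hm => ?_⟩
  by_cases hms : m = s
  · exact hms ▸ T.le_refl s
  · have hm0 : m = 0 := by
      by_contra hm0
      simp [coeff_sub, coeff_single, Ne.symm hms, Ne.symm hm0] at hm
    exact hm0 ▸ T.le_of_prod_le zero_le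

lemma single_sub_one_mem_recurrenceIdeal {s : ℕ × ℕ} (hper : ∀ k, U (s + k) = U k) :
    single s (1 : L) - single 0 1 ∈ recurrenceIdeal U := fun k => by
  rw [shiftEval_sub, shiftEval_single, shiftEval_single, hper, zero_add, sub_self]

lemma notMem_footprint_of_period {s n : ℕ × ℕ} (hs : s ≠ 0) (hper : ∀ k, U (s + k) = U k)
    (hsn : s ≤ n) : n ∉ footprint T U :=
  (notMem_footprint_iff T).2
    ⟨_, s, single_sub_one_mem_recurrenceIdeal hper, isLP_single_sub_one T hs, hsn⟩

lemma footprint_subset_Ibox {r₁ r₂ : ℕ} (hU : DoublyPeriodic r₁ r₂ U) (hr₁ : 0 < r₁)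
    (hr₂ : 0 < r₂) : footprint T U ⊆ Ibox r₁ r₂ := by
  intro n hn
  by_contra hbox
  rcases not_and_or.mp hbox with h | h
  · exact notMem_footprint_of_period T (s := (r₁, 0)) (by simp [hr₁.ne'])
      (fun k => hU _ _ (by simp) (by simp)) ⟨not_lt.mp h, Nat.zero_le _⟩ hn
  · exact notMem_footprint_of_period T (s := (0, r₂)) (by simp [hr₂.ne'])
      (fun k => hU _ _ (by simp) (by simp)) ⟨Nat.zero_le _, not_lt.mp h⟩ hn

lemma footprint_finite {r₁ r₂ : ℕ} (hU : DoublyPeriodic r₁ r₂ U) (hr₁ : 0 < r₁) (hr₂ : 0 < r₂) :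
    (footprint T U).Finite :=
  ((Set.finite_Iio r₁).prod (Set.finite_Iio r₂)).subset (footprint_subset_Ibox T hU hr₁ hr₂)

end Recurrences

lemma mul_le_ncard_add_ncard {A B : Set (ℕ × ℕ)} (hA : A.Finite) (hB : B.Finite) {n : ℕ × ℕ}
    (h : ∀ a ≤ n, a ∈ A ∨ n - a ∈ B) : (n.1 + 1) * (n.2 + 1) ≤ A.ncard + B.ncard := by
  have hcover : Set.Iic n ⊆ A ∪ (n - ·) '' B := fun a ha =>
    (h a ha).imp id fun hb => ⟨n - a, hb, tsub_tsub_cancel_of_le ha⟩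
  calc (n.1 + 1) * (n.2 + 1) = (Set.Iic n).ncard := by
        rw [← Finset.coe_Iic, Set.ncard_coe_finset, ← Finset.Iic_product_Iic]
        simp
    _ ≤ (A ∪ (n - ·) '' B).ncard := Set.ncard_le_ncard hcover (hA.union (hB.image _))
    _ ≤ A.ncard + ((n - ·) '' B).ncard := Set.ncard_union_le _ _
    _ ≤ A.ncard + B.ncard := Nat.add_le_add_left (Set.ncard_image_le hB) _

lemma mem_Sset_of_mul_le {t : ℕ} {n : ℕ × ℕ} (h : (n.1 + 1) * (n.2 + 1) ≤ 2 * t) : n ∈ Sset t := by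
  rcases Nat.eq_zero_or_pos n.1 with h₁ | h₁
  · rw [h₁] at h
    exact Or.inl ⟨h₁, by omega⟩
  rcases Nat.eq_zero_or_pos n.2 with h₂ | h₂
  · rw [h₂] at h
    exact Or.inr (Or.inl ⟨h₂, by omega⟩)
  have : 2 * (n.1 + n.2) ≤ (n.1 + 1) * (n.2 + 1) := by nlinarith
  exact Or.inr (Or.inr ⟨h₁, h₂, by omega⟩)

theorem stmt_15_general (T : MonomialOrder2) {L : Type*} [Field L] (r₁ r₂ t : ℕ)
    (hr₁ : 0 < r₁) (hr₂ : 0 < r₂)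
    (U V : ℕ × ℕ → L) (hU : DoublyPeriodic r₁ r₂ U) (hV : DoublyPeriodic r₁ r₂ V)
    (hfU : (footprint T U).ncard ≤ t) (hfV : (footprint T V).ncard ≤ t)
    (heq : ∀ n ∈ Sset t, U n = V n) :
    U = V := by
  refine sub_eq_zero.mp (eq_zero_of_forall_mem_footprint T fun n hn => ?_)
  have hbox := mul_le_ncard_add_ncard (footprint_finite T hU hr₁ hr₂)
    (footprint_finite T hV hr₁ hr₂)
    fun a ha => mem_footprint_or_of_mem_footprint_sub T hn (add_tsub_cancel_of_le ha)
  exact sub_eq_zero.mpr (heq n (mem_Sset_of_mul_le (by omega)))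

/-- two doubly periodic arrays of period `r₁ × r₂` with footprints of
size `≤ t` agreeing on `𝒮(t)` coincide. -/
theorem stmt_15 (T : MonomialOrder2) {L : Type*} [Field L] (r₁ r₂ t : ℕ)
    (ht : 1 ≤ t) (hr₁ : 0 < r₁) (hr₂ : 0 < r₂) (ht₁ : t ≤ r₁ / 2) (ht₂ : t ≤ r₂ / 2)
    (U V : ℕ × ℕ → L) (hU : DoublyPeriodic r₁ r₂ U) (hV : DoublyPeriodic r₁ r₂ V)
    (hfU : (footprint T U).ncard ≤ t) (hfV : (footprint T V).ncard ≤ t)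
    (heq : ∀ n ∈ Sset t, U n = V n) :
    U = V :=
  stmt_15_general T r₁ r₂ t hr₁ hr₂ U V hU hV hfU hfV heq
end

section
/- Let t, r₁, r₂ be positive integers with t ≤ ⌊r₁/2⌋ and t ≤ ⌊r₂/2⌋. Let D ⊆ I and suppose there exists τ ∈ I such that for every n ∈ 𝒮(t), the pair ((τ₁+n₁) mod r₁, (τ₂+n₂) mod r₂) belongs to D. Then every nonzero c ∈ 𝔽[X₁,X₂] with supp(c) ⊆ I satisfying c(α̅^m) = 0 for all m ∈ D has weight ω(c) ≥ 2t+1. (Equivalently, any abelian code in 𝔽[X₁,X₂]/(X₁^{r₁}−1, X₂^{r₂}−1) whose defining set with respect to α̅ contains τ + 𝒮(t) has minimum distance at least 2t+1.) -/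
/-!
Twisting the coefficients by `α̅^τ` turns the vanishing of `c` on `τ + 𝒮(t)` into the vanishing
of the power sums `∑ d k * x k ^ i * y k ^ j`, `(i, j) ∈ 𝒮(t)`, over the distinct points
`(x k, y k) = (α₁ ^ k₁, α₂ ^ k₂)` of the support, with all `d k ≠ 0`. Let `m` be the number of
distinct values of `x`. Whenever the rectangle `[0, m) × [0, n)` lies in `𝒮(t)`, a Vandermonde
system in the values of `x` kills the sums `∑ d k * y k ^ j` over each fiber of `x` for `j < n`,
and then a Vandermonde system in `y` forces each fiber to have more than `n` points, so the
support has at least `m (n + 1)` points. Taking `n = 1` gives `m ≤ t` for a support of at most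
`2t` points; then `n = 2t` if `m = 1`, and `n = t + 2 - m` if `m ≥ 2`, give more than `2t`.
-/

section PowerSums

variable {ι R : Type*} [CommRing R] [IsDomain R]

theorem Finset.eq_zero_of_forall_sum_mul_pow_eq_zero {S : Finset ι} {d v : ι → R}
    (hv : Set.InjOn v S) (h : ∀ j < S.card, ∑ k ∈ S, d k * v k ^ j = 0) :
    ∀ k ∈ S, d k = 0 := by
  intro k hk
  set e := S.equivFin
  have hzero : (fun i => d (e.symm i)) = 0 := by
    refine Matrix.eq_zero_of_forall_pow_sum_mul_pow_eq_zero (f := fun i => v (e.symm i))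
      (fun i j hij => e.symm.injective (Subtype.ext (hv (e.symm i).2 (e.symm j).2 hij)))
      fun j => ?_
    exact (e.symm.sum_comp fun k : S => d k * v k ^ (j : ℕ)).trans
      ((S.sum_coe_sort _).trans (h j j.2))
  simpa using congrFun hzero (e ⟨k, hk⟩)

theorem Finset.lt_card_of_forall_sum_mul_pow_eq_zero {S : Finset ι} (hS : S.Nonempty)
    {d v : ι → R} (hd : ∀ k ∈ S, d k ≠ 0) (hv : Set.InjOn v S) {n : ℕ}
    (h : ∀ j < n, ∑ k ∈ S, d k * v k ^ j = 0) : n < S.card := by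
  by_contra! hn
  obtain ⟨k, hk⟩ := hS
  exact hd k hk (S.eq_zero_of_forall_sum_mul_pow_eq_zero hv (fun j hj => h j (by omega)) k hk)

theorem Finset.sum_fiber_eq_zero_of_forall_sum_mul_pow_eq_zero [DecidableEq R] {S : Finset ι}
    {e x : ι → R} (h : ∀ i < (S.image x).card, ∑ k ∈ S, e k * x k ^ i = 0) :
    ∀ a ∈ S.image x, ∑ k ∈ S with x k = a, e k = 0 := by
  refine (S.image x).eq_zero_of_forall_sum_mul_pow_eq_zero (Set.injOn_id _) fun i hi => ?_
  rw [← h i hi, ← Finset.sum_fiberwise_of_maps_to (fun k hk => Finset.mem_image_of_mem x hk)]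
  refine Finset.sum_congr rfl fun a _ => ?_
  rw [Finset.sum_mul]
  exact Finset.sum_congr rfl fun k hk => by rw [(Finset.mem_filter.1 hk).2, id]

theorem two_mul_lt_card_of_forall_mem_Sset {t : ℕ} {S : Finset ι} (hS : S.Nonempty)
    {d x y : ι → R} (hd : ∀ k ∈ S, d k ≠ 0) (hxy : Set.InjOn (fun k => (x k, y k)) S)
    (h : ∀ n ∈ Sset t, ∑ k ∈ S, d k * x k ^ n.1 * y k ^ n.2 = 0) : 2 * t < S.card := by
  classical
  by_contra! hSt
  set X := S.image x
  set m := X.card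
  have hfiber_lt : ∀ n, (∀ i < m, ∀ j < n, (i, j) ∈ Sset t) →
      ∀ a ∈ X, n < (S.filter (x · = a)).card := by
    intro n hn a ha
    obtain ⟨k, hk, rfl⟩ := Finset.mem_image.1 ha
    refine Finset.lt_card_of_forall_sum_mul_pow_eq_zero ⟨k, by simp [hk]⟩
      (fun l hl => hd l (Finset.mem_filter.1 hl).1) (v := y) ?_ fun j hj => ?_
    · intro k₁ hk₁ k₂ hk₂ hy
      rw [Finset.coe_filter] at hk₁ hk₂
      exact hxy hk₁.1 hk₂.1 (Prod.ext (hk₁.2.trans hk₂.2.symm) hy)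
    · refine Finset.sum_fiber_eq_zero_of_forall_sum_mul_pow_eq_zero (e := fun l => d l * y l ^ j)
        (fun i hi => ?_) _ ha
      rw [← h (i, j) (hn i hi j hj)]
      exact Finset.sum_congr rfl fun l _ => by ring
  have hlower : ∀ n, (∀ i < m, ∀ j < n, (i, j) ∈ Sset t) → m * (n + 1) ≤ S.card := by
    intro n hn
    rw [Finset.card_eq_sum_card_fiberwise fun k hk => Finset.mem_image_of_mem x hk]
    exact (smul_eq_mul m (n + 1)).symm.trans_le
      (X.card_nsmul_le_sum _ (n + 1) fun a ha => hfiber_lt n hn a ha)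
  have hm : 1 ≤ m := Finset.card_pos.2 (hS.image x)
  have hmS : m ≤ S.card := Finset.card_image_le
  have h2m : m * 2 ≤ S.card := hlower 1 fun i hi j hj => by
    simp only [Sset, Set.mem_ofPred_eq]; omega
  rcases hm.eq_or_lt with hm1 | hm2
  · have := hlower (2 * t) fun i hi j hj => by
      simp only [Sset, Set.mem_ofPred_eq]; omega
    rw [← hm1] at this
    omega
  · obtain ⟨n, hn⟩ : ∃ n, t + 2 = m + n := ⟨t + 2 - m, by omega⟩
    have := hlower n fun i hi j hj => by
      simp only [Sset, Set.mem_ofPred_eq]; omega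
    nlinarith

end PowerSums

theorem evalAt_pow_add_mod {F L : Type*} [Field F] [Field L] [Algebra F L] {r₁ r₂ : ℕ}
    {α₁ α₂ : L} (h₁ : α₁ ^ r₁ = 1) (h₂ : α₂ ^ r₂ = 1) (c : AddMonoidAlgebra F (ℕ × ℕ))
    (τ n : ℕ × ℕ) :
    evalAt c (α₁ ^ ((τ.1 + n.1) % r₁)) (α₂ ^ ((τ.2 + n.2) % r₂)) =
      ∑ k ∈ c.coeff.support, algebraMap F L (c.coeff k) * α₁ ^ (k.1 * τ.1) * α₂ ^ (k.2 * τ.2) *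
        (α₁ ^ k.1) ^ n.1 * (α₂ ^ k.2) ^ n.2 := by
  refine Finset.sum_congr rfl fun k _ => ?_
  rw [← pow_eq_pow_mod _ h₁, ← pow_eq_pow_mod _ h₂]
  ring

theorem stmt_16_general {F L : Type*} [Field F] [Field L] [Algebra F L]
    (r₁ r₂ t : ℕ) (α₁ α₂ : L) (hα₁ : IsPrimitiveRoot α₁ r₁) (hα₂ : IsPrimitiveRoot α₂ r₂)
    (D : Set (ℕ × ℕ)) (τ : ℕ × ℕ)
    (hτD : ∀ n ∈ Sset t, ((τ.1 + n.1) % r₁, (τ.2 + n.2) % r₂) ∈ D)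
    (c : AddMonoidAlgebra F (ℕ × ℕ)) (hc : c ≠ 0) (hcI : ↑c.coeff.support ⊆ Ibox r₁ r₂)
    (hvan : ∀ m ∈ D, evalAt c (α₁ ^ m.1) (α₂ ^ m.2) = (0 : L)) :
    2 * t + 1 ≤ c.coeff.support.card := by
  have hS : c.coeff.support.Nonempty :=
    Finsupp.support_nonempty_iff.2 fun h => hc (AddMonoidAlgebra.coeff_eq_zero.1 h)
  refine two_mul_lt_card_of_forall_mem_Sset hS ?_ ?_
    fun n hn => (evalAt_pow_add_mod hα₁.pow_eq_one hα₂.pow_eq_one c τ n).symm.trans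
      (hvan _ (hτD n hn))
  · intro k hk
    obtain ⟨hk₁, hk₂⟩ : k.1 < r₁ ∧ k.2 < r₂ := hcI hk
    have hck : algebraMap F L (c.coeff k) ≠ 0 :=
      (map_ne_zero _).2 (Finsupp.mem_support_iff.1 hk)
    exact mul_ne_zero (mul_ne_zero hck (pow_ne_zero _ (hα₁.ne_zero (by omega))))
      (pow_ne_zero _ (hα₂.ne_zero (by omega)))
  · intro k hk l hl hkl
    obtain ⟨hk₁, hk₂⟩ : k.1 < r₁ ∧ k.2 < r₂ := hcI hk
    obtain ⟨hl₁, hl₂⟩ : l.1 < r₁ ∧ l.2 < r₂ := hcI hl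
    exact Prod.ext (hα₁.pow_inj hk₁ hl₁ (congrArg Prod.fst hkl))
      (hα₂.pow_inj hk₂ hl₂ (congrArg Prod.snd hkl))

/-- if the defining set `D` contains `τ + 𝒮(t)` (mod `(r₁, r₂)`), then
every nonzero codeword vanishing on `D` has weight at least `2t + 1`. -/
theorem stmt_16 {F L : Type*} [Field F] [Fintype F] [Field L] [Algebra F L]
    (r₁ r₂ t : ℕ) (ht : 1 ≤ t) (ht₁ : t ≤ r₁ / 2) (ht₂ : t ≤ r₂ / 2)
    (hq : Nat.Coprime (r₁ * r₂) (Fintype.card F))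
    (α₁ α₂ : L) (hα₁ : IsPrimitiveRoot α₁ r₁) (hα₂ : IsPrimitiveRoot α₂ r₂)
    (D : Set (ℕ × ℕ)) (hD : D ⊆ Ibox r₁ r₂)
    (τ : ℕ × ℕ) (hτ : τ ∈ Ibox r₁ r₂)
    (hτD : ∀ n ∈ Sset t, ((τ.1 + n.1) % r₁, (τ.2 + n.2) % r₂) ∈ D)
    (c : AddMonoidAlgebra F (ℕ × ℕ)) (hc : c ≠ 0) (hcI : ↑c.coeff.support ⊆ Ibox r₁ r₂)
    (hvan : ∀ m ∈ D, evalAt c (α₁ ^ m.1) (α₂ ^ m.2) = (0 : L)) :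
    2 * t + 1 ≤ c.coeff.support.card :=
  stmt_16_general r₁ r₂ t α₁ α₂ hα₁ hα₂ D τ hτD c hc hcI hvan
end

section
/- Let r₁, r₂ ≥ 2 be integers, I = {0,…,r₁−1}×{0,…,r₂−1}, and D ⊆ I. For k ∈ {1,2}, given b_k ≥ 0 and 2 ≤ δ_k ≤ r_k, set J_k = { (b_k + c) mod r_k : 0 ≤ c ≤ δ_k − 2 } and A_k = { (i₁,i₂) ∈ I : i_k ∈ J_k }. Then: (1) if A_k ⊆ D for some k ∈ {1,2}, then for every integer t with 1 ≤ t ≤ min(⌊(δ_k−1)/2⌋, ⌊r₁/2⌋, ⌊r₂/2⌋) there exists τ ∈ I such that ((τ₁+n₁) mod r₁, (τ₂+n₂) mod r₂) ∈ D for all n ∈ 𝒮(t); and (2) if A₁ ∪ A₂ ⊆ D, then the same conclusion holds for every integer t with 1 ≤ t ≤ min(δ₁+δ₂−3, ⌊r₁/2⌋, ⌊r₂/2⌋). -/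
/-- The set `A₁` of indices whose first coordinate lies in the consecutive run
`J₁ = {(b+c) mod r₁ : 0 ≤ c ≤ δ−2}`. -/
def Aset1 (r₁ r₂ b δ : ℕ) : Set (ℕ × ℕ) :=
  { p | p ∈ Ibox r₁ r₂ ∧ ∃ c ≤ δ - 2, p.1 = (b + c) % r₁ }

/-- The set `A₂` of indices whose second coordinate lies in the consecutive run
`J₂ = {(b+c) mod r₂ : 0 ≤ c ≤ δ−2}`. -/
def Aset2 (r₁ r₂ b δ : ℕ) : Set (ℕ × ℕ) :=
  { p | p ∈ Ibox r₁ r₂ ∧ ∃ c ≤ δ - 2, p.2 = (b + c) % r₂ }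

/-!
Place `τ` at the start `(b₁, b₂)` of the runs `J₁`, `J₂`. Both arms of `𝒮(t)` end at
`2t − 1 ≤ δₖ − 2`, so a single run already covers the translate. In the combined case a
point of `𝒮(t)` off the arms has coordinate sum at most `t ≤ (δ₁ − 2) + (δ₂ − 2) + 1`, so
one of its coordinates stays inside the corresponding run.
-/

namespace Sset

variable {t : ℕ} {n : ℕ × ℕ}

theorem fst_le (hn : n ∈ Sset t) : n.1 ≤ 2 * t - 1 := by
  rcases hn with h | h | h <;> omega

theorem snd_le (hn : n ∈ Sset t) : n.2 ≤ 2 * t - 1 := by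
  rcases hn with h | h | h <;> omega

theorem fst_le_or_snd_le {a b : ℕ} (hn : n ∈ Sset t) (ht : t ≤ a + b + 1) :
    n.1 ≤ a ∨ n.2 ≤ b := by
  rcases hn with h | h | h <;> omega

end Sset

section Translate

variable {r₁ r₂ : ℕ}

theorem mod_mem_Ibox (hr₁ : 0 < r₁) (hr₂ : 0 < r₂) (x y : ℕ) :
    (x % r₁, y % r₂) ∈ Ibox r₁ r₂ :=
  ⟨Nat.mod_lt _ hr₁, Nat.mod_lt _ hr₂⟩

theorem mod_add_mem_Aset1 (hr₁ : 0 < r₁) (hr₂ : 0 < r₂) {b δ c : ℕ} (hc : c ≤ δ - 2)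
    (y : ℕ) : ((b % r₁ + c) % r₁, y % r₂) ∈ Aset1 r₁ r₂ b δ :=
  ⟨mod_mem_Ibox hr₁ hr₂ _ _, c, hc, Nat.mod_add_mod b r₁ c⟩

theorem mod_add_mem_Aset2 (hr₁ : 0 < r₁) (hr₂ : 0 < r₂) {b δ c : ℕ} (hc : c ≤ δ - 2)
    (x : ℕ) : (x % r₁, (b % r₂ + c) % r₂) ∈ Aset2 r₁ r₂ b δ :=
  ⟨mod_mem_Ibox hr₁ hr₂ _ _, c, hc, Nat.mod_add_mod b r₂ c⟩

end Translate

theorem stmt_17_general (r₁ r₂ : ℕ) (D : Set (ℕ × ℕ)) (b₁ b₂ δ₁ δ₂ : ℕ) :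
    ((Aset1 r₁ r₂ b₁ δ₁ ⊆ D) → ∀ t, 1 ≤ t →
      t ≤ min ((δ₁ - 1) / 2) (min (r₁ / 2) (r₂ / 2)) →
      ∃ τ ∈ Ibox r₁ r₂, ∀ n ∈ Sset t, ((τ.1 + n.1) % r₁, (τ.2 + n.2) % r₂) ∈ D) ∧
    ((Aset2 r₁ r₂ b₂ δ₂ ⊆ D) → ∀ t, 1 ≤ t →
      t ≤ min ((δ₂ - 1) / 2) (min (r₁ / 2) (r₂ / 2)) →
      ∃ τ ∈ Ibox r₁ r₂, ∀ n ∈ Sset t, ((τ.1 + n.1) % r₁, (τ.2 + n.2) % r₂) ∈ D) ∧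
    ((Aset1 r₁ r₂ b₁ δ₁ ∪ Aset2 r₁ r₂ b₂ δ₂ ⊆ D) → ∀ t, 1 ≤ t →
      t ≤ min (δ₁ + δ₂ - 3) (min (r₁ / 2) (r₂ / 2)) →
      ∃ τ ∈ Ibox r₁ r₂, ∀ n ∈ Sset t, ((τ.1 + n.1) % r₁, (τ.2 + n.2) % r₂) ∈ D) := by
  refine ⟨fun hA t ht htle => ?_, fun hA t ht htle => ?_, fun hA t ht htle => ?_⟩
  all_goals
    simp only [le_min_iff] at htle
    have hr₁ : 0 < r₁ := by omega
    have hr₂ : 0 < r₂ := by omega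
  · refine ⟨(b₁ % r₁, 0 % r₂), mod_mem_Ibox hr₁ hr₂ _ _, fun n hn => hA ?_⟩
    exact mod_add_mem_Aset1 hr₁ hr₂ (by have := Sset.fst_le hn; omega) _
  · refine ⟨(0 % r₁, b₂ % r₂), mod_mem_Ibox hr₁ hr₂ _ _, fun n hn => hA ?_⟩
    exact mod_add_mem_Aset2 hr₁ hr₂ (by have := Sset.snd_le hn; omega) _
  · refine ⟨(b₁ % r₁, b₂ % r₂), mod_mem_Ibox hr₁ hr₂ _ _, fun n hn => hA ?_⟩
    rcases Sset.fst_le_or_snd_le hn (show t ≤ (δ₁ - 2) + (δ₂ - 2) + 1 by omega) with h | h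
    · exact Or.inl (mod_add_mem_Aset1 hr₁ hr₂ h _)
    · exact Or.inr (mod_add_mem_Aset2 hr₁ hr₂ h _)

/-- a defining set containing `A_k` (resp. `A₁ ∪ A₂`) contains a set of
the form `τ + 𝒮(t)` (mod `(r₁,r₂)`) for every admissible `t`. -/
theorem stmt_17 (r₁ r₂ : ℕ) (hr₁ : 2 ≤ r₁) (hr₂ : 2 ≤ r₂)
    (D : Set (ℕ × ℕ)) (hD : D ⊆ Ibox r₁ r₂)
    (b₁ b₂ δ₁ δ₂ : ℕ) (hδ₁ : 2 ≤ δ₁) (hδ₁r : δ₁ ≤ r₁) (hδ₂ : 2 ≤ δ₂) (hδ₂r : δ₂ ≤ r₂) :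
    ((Aset1 r₁ r₂ b₁ δ₁ ⊆ D) → ∀ t, 1 ≤ t →
      t ≤ min ((δ₁ - 1) / 2) (min (r₁ / 2) (r₂ / 2)) →
      ∃ τ ∈ Ibox r₁ r₂, ∀ n ∈ Sset t, ((τ.1 + n.1) % r₁, (τ.2 + n.2) % r₂) ∈ D) ∧
    ((Aset2 r₁ r₂ b₂ δ₂ ⊆ D) → ∀ t, 1 ≤ t →
      t ≤ min ((δ₂ - 1) / 2) (min (r₁ / 2) (r₂ / 2)) →
      ∃ τ ∈ Ibox r₁ r₂, ∀ n ∈ Sset t, ((τ.1 + n.1) % r₁, (τ.2 + n.2) % r₂) ∈ D) ∧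
    ((Aset1 r₁ r₂ b₁ δ₁ ∪ Aset2 r₁ r₂ b₂ δ₂ ⊆ D) → ∀ t, 1 ≤ t →
      t ≤ min (δ₁ + δ₂ - 3) (min (r₁ / 2) (r₂ / 2)) →
      ∃ τ ∈ Ibox r₁ r₂, ∀ n ∈ Sset t, ((τ.1 + n.1) % r₁, (τ.2 + n.2) % r₂) ∈ D) :=
  stmt_17_general r₁ r₂ D b₁ b₂ δ₁ δ₂
end
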